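/- Let m ≥ p + 1 and z_1, …, z_m ∈ ℝ^p and a_1, …, a_m ∈ ℝ be such that for any p+1 distinct indices i_1, …, i_{p+1}, the (p+1)×(p+1) matrix whose rows are (z_{i_j}^⊤, a_{i_j}) is invertible. Then there exists ε > 0 such that for every β ∈ ℝ^p and every choice of p+1 distinct indices i_1, …, i_{p+1}, at least one j ∈ {1,…,p+1} satisfies |a_{i_j} − ⟨z_{i_j}, β⟩| > ε, and moreover the ε can be chosen uniformly in β provided that for any p distinct indices the matrix with rows z_{i_1}^⊤, …, z_{i_p}^⊤ is invertible. -/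

import Mathlib

/-!
Write a residual `a_i - ⟪z_i, β⟫` as the `i`-th entry of `M *ᵥ (-β, 1)`, where `M` has rows
`(z_i, a_i)`. For an invertible `(p+1)`-tuple of rows this gives `(-β, 1) = M⁻¹ *ᵥ r`, so reading
off the last coordinate, `1 ≤ (∑ₖ |M⁻¹ last k|) · max |r|`. There are finitely many tuples, so the
residuals of any tuple cannot all be smaller than `1 / (C + 1)`, with `C` the sum of these constants.
-/

open Matrix

theorem Matrix.abs_apply_le_of_mulVec_eq {n : Type*} [Fintype n] [DecidableEq n]
    {M : Matrix n n ℝ} (hM : IsUnit M) {v f : n → ℝ} (hMv : M *ᵥ v = f) {δ : ℝ}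
    (hf : ∀ j, |f j| ≤ δ) (i : n) : |v i| ≤ (∑ j, |M⁻¹ i j|) * δ := by
  have hv : v = M⁻¹ *ᵥ f := by
    rw [← hMv, mulVec_mulVec, nonsing_inv_mul _ ((isUnit_iff_isUnit_det M).mp hM), one_mulVec]
  calc |v i| = |∑ j, M⁻¹ i j * f j| := by rw [hv]; rfl
    _ ≤ ∑ j, |M⁻¹ i j * f j| := Finset.abs_sum_le_sum_abs _ _
    _ ≤ ∑ j, |M⁻¹ i j| * δ := Finset.sum_le_sum fun j _ => by
        rw [abs_mul]; exact mul_le_mul_of_nonneg_left (hf j) (abs_nonneg _)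
    _ = (∑ j, |M⁻¹ i j|) * δ := (Finset.sum_mul _ _ _).symm

def augmentedMatrix {n : Type*} {p : ℕ} (z : n → EuclideanSpace ℝ (Fin p)) (a : n → ℝ) :
    Matrix n (Fin (p + 1)) ℝ :=
  Matrix.of fun j k => Fin.lastCases (a j) (fun k' => z j k') k

theorem augmentedMatrix_mulVec {n : Type*} {p : ℕ} (z : n → EuclideanSpace ℝ (Fin p))
    (a : n → ℝ) (β : EuclideanSpace ℝ (Fin p)) :
    augmentedMatrix z a *ᵥ Fin.lastCases 1 (fun k => -β k) = fun j => a j - inner ℝ (z j) β := by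
  funext j
  simp only [augmentedMatrix, mulVec, dotProduct, of_apply, Fin.sum_univ_castSucc,
    Fin.lastCases_last, Fin.lastCases_castSucc, PiLp.inner_apply, RCLike.inner_apply,
    conj_trivial, mul_neg, Finset.sum_neg_distrib, mul_one]
  simp only [mul_comm (β _)]
  ring

theorem uniform_slab_escape_general (m p : ℕ)
    (z : Fin m → EuclideanSpace ℝ (Fin p)) (a : Fin m → ℝ)
    (h2 : ∀ ι : Fin (p + 1) → Fin m, Function.Injective ι →
      IsUnit (Matrix.of fun j k =>
        Fin.lastCases (a (ι j)) (fun k' => z (ι j) k') k :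
          Matrix (Fin (p + 1)) (Fin (p + 1)) ℝ)) :
    ∃ ε > (0 : ℝ), ∀ β : EuclideanSpace ℝ (Fin p),
      ∀ ι : Fin (p + 1) → Fin m, Function.Injective ι →
        ∃ j : Fin (p + 1), ε < |a (ι j) - (inner ℝ (z (ι j)) β : ℝ)| := by
  set c : (Fin (p + 1) → Fin m) → ℝ :=
    fun ι => ∑ k, |(augmentedMatrix (z ∘ ι) (a ∘ ι))⁻¹ (Fin.last p) k|
  have hc : ∀ ι, 0 ≤ c ι := fun ι => Finset.sum_nonneg fun _ _ => abs_nonneg _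
  set C := ∑ ι, c ι
  have hcC : ∀ ι, c ι ≤ C := fun ι => Finset.single_le_sum (fun ι _ => hc ι) (Finset.mem_univ ι)
  refine ⟨1 / (C + 1), by positivity, fun β ι hι => ?_⟩
  by_contra! hsmall
  have hone : 1 ≤ c ι * (1 / (C + 1)) := by
    have h := Matrix.abs_apply_le_of_mulVec_eq (h2 ι hι)
      (augmentedMatrix_mulVec (z ∘ ι) (a ∘ ι) β) hsmall (Fin.last p)
    rwa [Fin.lastCases_last, abs_one] at h
  rw [mul_one_div, le_div_iff₀ (by positivity)] at hone
  linarith [hcC ι]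

theorem uniform_slab_escape (m p : ℕ) (hmp : p + 1 ≤ m)
    (z : Fin m → EuclideanSpace ℝ (Fin p)) (a : Fin m → ℝ)
    (h1 : ∀ ι : Fin p → Fin m, Function.Injective ι →
      IsUnit (Matrix.of fun j k => z (ι j) k : Matrix (Fin p) (Fin p) ℝ))
    (h2 : ∀ ι : Fin (p + 1) → Fin m, Function.Injective ι →
      IsUnit (Matrix.of fun j k =>
        Fin.lastCases (a (ι j)) (fun k' => z (ι j) k') k :
          Matrix (Fin (p + 1)) (Fin (p + 1)) ℝ)) :
    ∃ ε > (0 : ℝ), ∀ β : EuclideanSpace ℝ (Fin p),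
      ∀ ι : Fin (p + 1) → Fin m, Function.Injective ι →
        ∃ j : Fin (p + 1), ε < |a (ι j) - (inner ℝ (z (ι j)) β : ℝ)| :=
  uniform_slab_escape_general m p z a h2
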